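/- Let $L$ be a vertical line and $S$ a finite set of non-vertical lines, partitioned into layers $L_1(S), L_2(S), \ldots$ where $L_i(S)$ consists of the lines on the upper envelope of $S \setminus \bigcup_{j<i} L_j(S)$. Let $l^1$ be the line of $S$ with the highest intersection with $L$, so $l^1 = l_1(L)$, the line of $L_1(S)$ achieving the upper envelope of $L_1(S)$ at $L$. Then the line $l^2$ of $S \setminus \{l^1\}$ with the highest intersection with $L$ belongs to the set $H$ consisting of: $l_2(L)$ (the line of $L_2(S)$ achieving the upper envelope of $L_2(S)$ at $L$), the left neighbor of $l_1(L)$ in $L_1(S)$, and the right neighbor of $l_1(L)$ in $L_1(S)$ (where neighbors refer to the ordering of lines along the upper envelope of $L_1(S)$). -/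

import Mathlib

/-!
A line that is strictly highest at `x0` stays highest on a neighbourhood of `x0`, so `l1` lies in
the first layer, and `lsec`, if it is not in the first layer, lies in the second one and must be
`l2`. If `lsec` is in the first layer, a line `q` of that layer with slope strictly between those
of `lsec` and `l1` is below both at `x0`, hence below the steeper of the two to the right of `x0`
and below the flatter one to the left: it never reaches the upper envelope.
-/

open Set Filter Topology

/-- The paper's "`p` appears on the upper envelope of `T`". -/
def IsOnUpperEnvelope {ι : Type*} (f : ι → ℝ → ℝ) (T : Finset ι) (p : ι) : Prop :=
  ∃ x y : ℝ, x < y ∧ ∀ z ∈ Ioo x y, ∀ q ∈ T, f q z ≤ f p z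

theorem isOnUpperEnvelope_of_forall_lt {ι : Type*} {f : ι → ℝ → ℝ}
    (hf : ∀ i, Continuous (f i)) {T : Finset ι} {p : ι} {x0 : ℝ}
    (hp : ∀ q ∈ T, q ≠ p → f q x0 < f p x0) :
    IsOnUpperEnvelope f T p := by
  have hev : ∀ᶠ z in 𝓝 x0, ∀ q ∈ T, q ≠ p → f q z < f p z :=
    (Finset.eventually_all T).2 fun q hq =>
      eventually_imp_distrib_left.2 fun hqp =>
        (hf q).continuousAt.eventually_lt (hf p).continuousAt (hp q hq hqp)
  obtain ⟨x, y, hx0, hsub⟩ := mem_nhds_iff_exists_Ioo_subset.1 hev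
  refine ⟨x, y, hx0.1.trans hx0.2, fun z hz q hq => ?_⟩
  rcases eq_or_ne q p with rfl | hqp
  · exact le_rfl
  · exact (hsub hz q hq hqp).le

theorem lt_max_of_slope_mem_Ioo {a b q : ℝ × ℝ} {x0 : ℝ}
    (hslope : q.1 ∈ Ioo (min a.1 b.1) (max a.1 b.1))
    (ha : q.1 * x0 + q.2 < a.1 * x0 + a.2) (hb : q.1 * x0 + q.2 < b.1 * x0 + b.2) (z : ℝ) :
    q.1 * z + q.2 < max (a.1 * z + a.2) (b.1 * z + b.2) := by
  obtain ⟨hmin, hmax⟩ := hslope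
  have key : ∀ c d : ℝ × ℝ, c.1 < q.1 → q.1 < d.1 → q.1 * x0 + q.2 < c.1 * x0 + c.2 →
      q.1 * x0 + q.2 < d.1 * x0 + d.2 → q.1 * z + q.2 < max (c.1 * z + c.2) (d.1 * z + d.2) := by
    intro c d hc hd hcx hdx
    rcases le_total x0 z with h | h
    · exact lt_max_of_lt_right (by nlinarith)
    · exact lt_max_of_lt_left (by nlinarith)
  rcases le_total a.1 b.1 with h | h
  · rw [min_eq_left h] at hmin
    rw [max_eq_right h] at hmax
    exact key a b hmin hmax ha hb
  · rw [min_eq_right h] at hmin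
    rw [max_eq_left h] at hmax
    rw [max_comm]
    exact key b a hmin hmax hb ha

theorem not_isOnUpperEnvelope_of_slope_mem_Ioo {T : Finset (ℝ × ℝ)} {a b q : ℝ × ℝ}
    {x0 : ℝ} (haT : a ∈ T) (hbT : b ∈ T) (hslope : q.1 ∈ Ioo (min a.1 b.1) (max a.1 b.1))
    (ha : q.1 * x0 + q.2 < a.1 * x0 + a.2) (hb : q.1 * x0 + q.2 < b.1 * x0 + b.2) :
    ¬IsOnUpperEnvelope (fun p x => p.1 * x + p.2) T q := by
  rintro ⟨x, y, hxy, hdom⟩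
  have hz : (x + y) / 2 ∈ Ioo x y := ⟨by linarith, by linarith⟩
  exact (lt_max_of_slope_mem_Ioo hslope ha hb _).not_ge
    (max_le (hdom _ hz a haT) (hdom _ hz b hbT))

theorem stmt9_general (S : Finset (ℝ × ℝ)) (x0 : ℝ)
    (val : ℝ × ℝ → ℝ → ℝ) (hval : ∀ p x, val p x = p.1 * x + p.2)
    (hdist : ∀ p ∈ S, ∀ q ∈ S, val p x0 = val q x0 → p = q)
    (L1 : Finset (ℝ × ℝ))
    (hL1 : ∀ p, p ∈ L1 ↔ p ∈ S ∧ ∃ x y : ℝ, x < y ∧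
      ∀ z ∈ Set.Ioo x y, ∀ q ∈ S, val q z ≤ val p z)
    (L2 : Finset (ℝ × ℝ))
    (hL2 : ∀ p, p ∈ L2 ↔ p ∈ S \ L1 ∧ ∃ x y : ℝ, x < y ∧
      ∀ z ∈ Set.Ioo x y, ∀ q ∈ S \ L1, val q z ≤ val p z)
    (l1 : ℝ × ℝ) (hl1 : l1 ∈ S) (hl1max : ∀ q ∈ S, val q x0 ≤ val l1 x0)
    (l2 : ℝ × ℝ) (hl2 : l2 ∈ L2) (hl2max : ∀ q ∈ L2, val q x0 ≤ val l2 x0)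
    (lsec : ℝ × ℝ) (hlsec : lsec ∈ S)
    (hlsecmax : ∀ q ∈ S, q ≠ l1 → val q x0 ≤ val lsec x0) :
    lsec = l2 ∨ (lsec ∈ L1 ∧
      ∀ q ∈ L1, ¬(min lsec.1 l1.1 < q.1 ∧ q.1 < max lsec.1 l1.1)) := by
  obtain rfl : val = fun p x => p.1 * x + p.2 := funext₂ hval
  have hcont : ∀ p : ℝ × ℝ, Continuous fun x => p.1 * x + p.2 := fun p => by fun_prop
  have hbelow : ∀ p ∈ S, ∀ q ∈ S, q ≠ p →
      q.1 * x0 + q.2 ≤ p.1 * x0 + p.2 → q.1 * x0 + q.2 < p.1 * x0 + p.2 :=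
    fun p hp q hq hqp hle => hle.lt_of_ne fun h => hqp (hdist q hq p hp h)
  have hl1L1 : l1 ∈ L1 := (hL1 l1).2 ⟨hl1, isOnUpperEnvelope_of_forall_lt hcont
    fun q hq hq1 => hbelow l1 hl1 q hq hq1 (hl1max q hq)⟩
  by_cases hmem : lsec ∈ L1
  · refine Or.inr ⟨hmem, fun q hq hslope => ?_⟩
    obtain ⟨hqS, hqenv⟩ := (hL1 q).1 hq
    have hq1 : q ≠ l1 := by rintro rfl; grind
    have hq2 : q ≠ lsec := by rintro rfl; grind
    exact not_isOnUpperEnvelope_of_slope_mem_Ioo hlsec hl1 hslope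
      (hbelow lsec hlsec q hqS hq2 (hlsecmax q hqS hq1))
      (hbelow l1 hl1 q hqS hq1 (hl1max q hqS)) hqenv
  · have hlsecL2 : lsec ∈ L2 := (hL2 lsec).2 ⟨Finset.mem_sdiff.2 ⟨hlsec, hmem⟩,
      isOnUpperEnvelope_of_forall_lt hcont fun q hq hqne => by
        obtain ⟨hqS, hqL1⟩ := Finset.mem_sdiff.1 hq
        exact hbelow lsec hlsec q hqS hqne
          (hlsecmax q hqS (ne_of_mem_of_not_mem hl1L1 hqL1).symm)⟩
    obtain ⟨hl2S, hl2L1⟩ := Finset.mem_sdiff.1 ((hL2 l2).1 hl2).1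
    have hl2ne : l2 ≠ l1 := (ne_of_mem_of_not_mem hl1L1 hl2L1).symm
    exact Or.inl (hdist lsec hlsec l2 hl2S
      (le_antisymm (hl2max lsec hlsecL2) (hlsecmax l2 hl2S hl2ne)))

/-- Lemma 4 (lem:40): the line `lsec` of `S \ {l1}` with the highest intersection with the
vertical line at `x0` is either the line of the second layer `L2` achieving its upper
envelope at `x0`, or a (left or right) neighbor of `l1` in the first layer `L1` (lines of
a layer being ordered by slope). Lines are pairs `(slope, intercept)`. -/
theorem stmt9 (S : Finset (ℝ × ℝ)) (x0 : ℝ)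
    (val : ℝ × ℝ → ℝ → ℝ) (hval : ∀ p x, val p x = p.1 * x + p.2)
    (hdist : ∀ p ∈ S, ∀ q ∈ S, val p x0 = val q x0 → p = q)
    (L1 : Finset (ℝ × ℝ))
    (hL1 : ∀ p, p ∈ L1 ↔ p ∈ S ∧ ∃ x y : ℝ, x < y ∧
      ∀ z ∈ Set.Ioo x y, ∀ q ∈ S, val q z ≤ val p z)
    (L2 : Finset (ℝ × ℝ))
    (hL2 : ∀ p, p ∈ L2 ↔ p ∈ S \ L1 ∧ ∃ x y : ℝ, x < y ∧
      ∀ z ∈ Set.Ioo x y, ∀ q ∈ S \ L1, val q z ≤ val p z)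
    (l1 : ℝ × ℝ) (hl1 : l1 ∈ S) (hl1max : ∀ q ∈ S, val q x0 ≤ val l1 x0)
    (l2 : ℝ × ℝ) (hl2 : l2 ∈ L2) (hl2max : ∀ q ∈ L2, val q x0 ≤ val l2 x0)
    (lsec : ℝ × ℝ) (hlsec : lsec ∈ S) (hlsecne : lsec ≠ l1)
    (hlsecmax : ∀ q ∈ S, q ≠ l1 → val q x0 ≤ val lsec x0) :
    lsec = l2 ∨ (lsec ∈ L1 ∧
      ∀ q ∈ L1, ¬(min lsec.1 l1.1 < q.1 ∧ q.1 < max lsec.1 l1.1)) :=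
  stmt9_general S x0 val hval hdist L1 hL1 L2 hL2 l1 hl1 hl1max l2 hl2 hl2max lsec hlsec hlsecmax
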